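/- Let I ⊆ R be a monomial ideal with linear quotients whose decomposition function b is regular. For i ≥ 1 let F_i be the free R-module with basis the symbols (m;α) with m ∈ G(I), α ⊆ set(m), |α| = i−1, and let F_0 := R. Define R-linear maps d : F_i → F_{i−1} by d(m;∅) := m, and for α = {j_1 < … < j_p} with p ≥ 1: d(m;α) := Σ_{i=1}^p (−1)^i x_{j_i} (m; α∖{j_i}) − Σ_{i=1}^p (−1)^i (x_{j_i}·m / b(x_{j_i}·m)) (b(x_{j_i}·m); α∖{j_i}), where a symbol (u;β) is interpreted as 0 whenever β ⊄ set(u). Then d ∘ d = 0, i.e., this data is a chain complex of free R-modules. -/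

import Mathlib

/-!
Applying `d` twice to a basis symbol `(g;α)` gives a double sum over ordered pairs `(t, s)` of
distinct elements of `α`. The sign `(-1)^(ε(α;t) + ε(α∖t;s))` changes when `t` and `s` are
swapped, so it suffices that the unsigned pair terms are symmetric in `(t, s)`. Two properties of
the decomposition function give this symmetry: if `t ∉ set(b u)` then `b(x_t u) = b(u)` (linear
quotients), and if `t ∈ set(b u)` then `b(x_t u) = b(x_t b(u))` (regularity, Herzog–Takayama).
If `t ∈ set(b(x_s m))` and `s ∈ set(b(x_t m))`, they give `b(x_s b(x_t m)) = b(x_t b(x_s m))`.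
Otherwise, say `t ∉ set(b(x_s m))`, minimality of the generators forces `s ∈ set(b(x_t m))` and
`b(x_s b(x_t m)) = b(x_s m)`, and the pair term collapses to the same two summands from either
side. Regularity also makes the symbols `(u;β)` with `β ⊄ set(u)` vanish compatibly.
-/

open MvPolynomial

/-- The monomial ideal generated by a set of exponent vectors. -/
noncomputable def genIdeal (K : Type*) [Field K] {n : ℕ} (ms : Set (Fin n →₀ ℕ)) :
    Ideal (MvPolynomial (Fin n) K) :=
  Ideal.span ((fun u => MvPolynomial.monomial u (1 : K)) '' ms)

/-- The colon ideal `⟨m_1, …, m_{j-1}⟩ : m_j`. -/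
noncomputable def colonJ (K : Type*) [Field K] {n k : ℕ} (m : Fin k → (Fin n →₀ ℕ))
    (j : Fin k) : Ideal (MvPolynomial (Fin n) K) :=
  Submodule.colon (genIdeal K {u | ∃ i : Fin k, i < j ∧ u = m i})
    (Ideal.span {MvPolynomial.monomial (m j) (1 : K)})

/-- `I` has linear quotients w.r.t. the ordering `m_1,…,m_k` of its generators:
each colon ideal is generated by a subset of the variables. -/
def HasLinearQuotients (K : Type*) [Field K] {n k : ℕ}
    (m : Fin k → (Fin n →₀ ℕ)) : Prop :=
  ∀ j : Fin k, ∃ S : Set (Fin n),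
    colonJ K m j = Ideal.span ((fun s => (MvPolynomial.X s : MvPolynomial (Fin n) K)) '' S)

/-- `set(m_j) = {i : x_i ∈ ⟨m_1,…,m_{j-1}⟩ : m_j}`. -/
def mset (K : Type*) [Field K] {n k : ℕ} (m : Fin k → (Fin n →₀ ℕ)) (j : Fin k) :
    Set (Fin n) :=
  {t | (MvPolynomial.X t : MvPolynomial (Fin n) K) ∈ colonJ K m j}

/-- The `m i` are minimal monomial generators: none divides another. -/
def MinimalGens {n k : ℕ} (m : Fin k → (Fin n →₀ ℕ)) : Prop :=
  ∀ i j : Fin k, m i ≤ m j → i = j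

/-- `b` is the decomposition function: for a monomial `u ∈ I`, `b u` is the smallest
index `j` with `u ∈ ⟨m_1,…,m_j⟩`. -/
def IsDecompositionFunction (K : Type*) [Field K] {n k : ℕ}
    (m : Fin k → (Fin n →₀ ℕ)) (b : (Fin n →₀ ℕ) → Fin k) : Prop :=
  ∀ u : Fin n →₀ ℕ, MvPolynomial.monomial u (1 : K) ∈ genIdeal K (Set.range m) →
    (MvPolynomial.monomial u (1 : K) ∈ genIdeal K {v | ∃ i : Fin k, i ≤ b u ∧ v = m i}) ∧
    (∀ j : Fin k,
      MvPolynomial.monomial u (1 : K) ∈ genIdeal K {v | ∃ i : Fin k, i ≤ j ∧ v = m i} →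
      b u ≤ j)

/-- The decomposition function is regular: `set(b(x_t·m)) ⊆ set(m)` for every
generator `m` and every `t ∈ set(m)`. -/
def IsRegularDecomp (K : Type*) [Field K] {n k : ℕ}
    (m : Fin k → (Fin n →₀ ℕ)) (b : (Fin n →₀ ℕ) → Fin k) : Prop :=
  ∀ j : Fin k, ∀ t ∈ mset K m j,
    mset K m (b (m j + Finsupp.single t 1)) ⊆ mset K m j

open scoped Classical

/-- `ε(α;t) = #{s ∈ α : s < t}`; the (1-based) position of `t` in `α` is `ε(α;t)+1`. -/
def eps {n : ℕ} (α : Finset (Fin n)) (t : Fin n) : ℕ := (α.filter (· < t)).card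

/-- The basis symbols `(m;α)` with `α ⊆ set(m)` and `|α| = i` (these span `F_{i+1}`). -/
def SymT (K : Type*) [Field K] {n k : ℕ} (m : Fin k → (Fin n →₀ ℕ)) (i : ℕ) : Type _ :=
  {s : Fin k × Finset (Fin n) // ↑s.2 ⊆ mset K m s.1 ∧ s.2.card = i}

/-- The symbol `(j';β)` as an element of `F_{i+1} = SymT i →₀ R`, interpreted as `0`
whenever `β ⊄ set(j')` (or the cardinality is wrong). -/
noncomputable def symEl (K : Type*) [Field K] {n k : ℕ} (m : Fin k → (Fin n →₀ ℕ))
    (i : ℕ) (j' : Fin k) (β : Finset (Fin n)) :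
    SymT K m i →₀ MvPolynomial (Fin n) K :=
  if h : ↑β ⊆ mset K m j' ∧ β.card = i then Finsupp.single ⟨(j', β), h⟩ 1 else 0

/-- `d : F_1 → F_0 = R`, `d(m;∅) = m`. -/
noncomputable def dZero (K : Type*) [Field K] {n k : ℕ} (m : Fin k → (Fin n →₀ ℕ)) :
    (SymT K m 0 →₀ MvPolynomial (Fin n) K) →ₗ[MvPolynomial (Fin n) K]
      MvPolynomial (Fin n) K :=
  Finsupp.linearCombination (MvPolynomial (Fin n) K)
    (fun s : SymT K m 0 => MvPolynomial.monomial (m s.1.1) (1 : K))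

/-- `d : F_{i+2} → F_{i+1}` on the basis symbol `(m;α)` (with `|α| = i+1`):
`d(m;α) = Σ (−1)^i x_{j_i}(m;α∖j_i) − Σ (−1)^i (x_{j_i}m/b(x_{j_i}m))(b(x_{j_i}m);α∖j_i)`,
where the (1-based) position of `t = j_i` in `α` is `eps α t + 1`. -/
noncomputable def dBasisSucc (K : Type*) [Field K] {n k : ℕ}
    (m : Fin k → (Fin n →₀ ℕ)) (b : (Fin n →₀ ℕ) → Fin k) (i : ℕ)
    (s : SymT K m (i + 1)) : SymT K m i →₀ MvPolynomial (Fin n) K :=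
  (∑ t ∈ s.1.2,
      (((-1 : MvPolynomial (Fin n) K) ^ (eps s.1.2 t + 1)) * MvPolynomial.X t) •
        symEl K m i s.1.1 (s.1.2.erase t))
  - ∑ t ∈ s.1.2,
      (((-1 : MvPolynomial (Fin n) K) ^ (eps s.1.2 t + 1)) *
          MvPolynomial.monomial
            ((m s.1.1 + Finsupp.single t 1) - m (b (m s.1.1 + Finsupp.single t 1)))
            (1 : K)) •
        symEl K m i (b (m s.1.1 + Finsupp.single t 1)) (s.1.2.erase t)

/-- The differential `d : F_{i+2} → F_{i+1}` of the iterated mapping cone resolution. -/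
noncomputable def dSucc (K : Type*) [Field K] {n k : ℕ} (m : Fin k → (Fin n →₀ ℕ))
    (b : (Fin n →₀ ℕ) → Fin k) (i : ℕ) :
    (SymT K m (i + 1) →₀ MvPolynomial (Fin n) K) →ₗ[MvPolynomial (Fin n) K]
      (SymT K m i →₀ MvPolynomial (Fin n) K) :=
  Finsupp.linearCombination (MvPolynomial (Fin n) K) (dBasisSucc K m b i)


open Finsupp (single)

theorem Finsupp.add_single_one_le_iff {ι : Type*} {p u : ι →₀ ℕ} {r : ι} :
    p + single r 1 ≤ u ↔ p ≤ u ∧ p r < u r := by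
  classical
  simp only [Finsupp.le_def, Finsupp.add_apply, Finsupp.single_apply]
  refine ⟨fun h => ⟨fun x => (Nat.le_add_right _ _).trans (h x), by simpa using h r⟩, ?_⟩
  rintro ⟨h, hr⟩ x
  split_ifs with hx
  · subst hx; omega
  · simpa using h x

theorem Finsupp.exists_add_single_one_le_of_lt {ι : Type*} {p u : ι →₀ ℕ} (h : p < u) :
    ∃ r, p + single r 1 ≤ u := by
  obtain ⟨r, hr⟩ : ∃ r, p r < u r := by
    by_contra! hge
    exact h.ne (le_antisymm h.le fun x => hge x)
  exact ⟨r, Finsupp.add_single_one_le_iff.mpr ⟨h.le, hr⟩⟩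

theorem Finsupp.le_of_le_add_single_of_le_add_single {ι : Type*} {v u : ι →₀ ℕ} {t s : ι}
    (hts : t ≠ s) (ht : v ≤ u + single t 1) (hs : v ≤ u + single s 1) : v ≤ u := by
  classical
  intro x
  have ht := ht x
  have hs := hs x
  simp only [Finsupp.add_apply, Finsupp.single_apply] at ht hs
  split_ifs at ht hs with hxt hxs
  · exact absurd (hxt.trans hxs.symm) hts
  all_goals omega

section Decomposition

variable {K : Type*} [Field K] {n k : ℕ} {m : Fin k → (Fin n →₀ ℕ)}
  {b : (Fin n →₀ ℕ) → Fin k}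

theorem monomial_mem_genIdeal_iff {S : Set (Fin n →₀ ℕ)} {u : Fin n →₀ ℕ} :
    monomial u (1 : K) ∈ genIdeal K S ↔ ∃ v ∈ S, v ≤ u := by
  simp [genIdeal, mem_ideal_span_monomial_image, support_monomial]

theorem monomial_mem_colonJ_iff {j : Fin k} {v : Fin n →₀ ℕ} :
    monomial v (1 : K) ∈ colonJ K m j ↔ ∃ i < j, m i ≤ v + m j := by
  rw [colonJ, Submodule.mem_colon_span_singleton, smul_eq_mul, monomial_mul, one_mul,
    monomial_mem_genIdeal_iff]
  simp

theorem mem_mset_iff {j : Fin k} {t : Fin n} :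
    t ∈ mset K m j ↔ ∃ i < j, m i ≤ m j + single t 1 := by
  change (X t : MvPolynomial (Fin n) K) ∈ colonJ K m j ↔ _
  rw [X, monomial_mem_colonJ_iff, add_comm (single t 1)]

theorem HasLinearQuotients.exists_mem_mset_lt (hlq : HasLinearQuotients K m) {i j : Fin k}
    (hij : i < j) : ∃ r ∈ mset K m j, m j r < m i r := by
  obtain ⟨S, hS⟩ := hlq j
  have hmem : monomial (m i - m j) (1 : K) ∈ colonJ K m j :=
    monomial_mem_colonJ_iff.mpr ⟨i, hij, le_tsub_add⟩
  rw [hS, mem_ideal_span_X_image] at hmem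
  obtain ⟨r, hrS, hr⟩ := hmem (m i - m j) (by simp [support_monomial])
  refine ⟨r, ?_, by simp at hr; omega⟩
  change (X r : MvPolynomial (Fin n) K) ∈ colonJ K m j
  exact hS ▸ Ideal.subset_span ⟨r, hrS, rfl⟩

namespace IsDecompositionFunction

theorem apply_le (hb : IsDecompositionFunction K m b) {u : Fin n →₀ ℕ} {i : Fin k}
    (h : m i ≤ u) : b u ≤ i :=
  (hb u (monomial_mem_genIdeal_iff.mpr ⟨m i, ⟨i, rfl⟩, h⟩)).2 i
    (monomial_mem_genIdeal_iff.mpr ⟨m i, ⟨i, le_rfl, rfl⟩, h⟩)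

theorem gen_apply_le (hb : IsDecompositionFunction K m b) {u : Fin n →₀ ℕ}
    (hu : ∃ i, m i ≤ u) : m (b u) ≤ u := by
  obtain ⟨i₀, hi₀⟩ := hu
  obtain ⟨_, ⟨i, hib, rfl⟩, hle⟩ := monomial_mem_genIdeal_iff.mp
    (hb u (monomial_mem_genIdeal_iff.mpr ⟨m i₀, ⟨i₀, rfl⟩, hi₀⟩)).1
  rwa [le_antisymm hib (hb.apply_le hle)] at hle

theorem apply_eq_of_le (hb : IsDecompositionFunction K m b) {u v : Fin n →₀ ℕ}
    (hgen : m (b u) ≤ v) (hvu : v ≤ u) : b v = b u :=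
  le_antisymm (hb.apply_le hgen) (hb.apply_le ((hb.gen_apply_le ⟨_, hgen⟩).trans hvu))

theorem notMem_mset_of_add_single_le (hb : IsDecompositionFunction K m b)
    {u : Fin n →₀ ℕ} {r : Fin n} (h : m (b u) + single r 1 ≤ u) : r ∉ mset K m (b u) := by
  intro hr
  obtain ⟨w, hw, hwle⟩ := mem_mset_iff.mp hr
  exact (hb.apply_le (hwle.trans h)).not_gt hw

theorem apply_add_single_lt (hb : IsDecompositionFunction K m b) {j : Fin k} {t : Fin n}
    (ht : t ∈ mset K m j) : b (m j + single t 1) < j := by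
  obtain ⟨i, hij, hle⟩ := mem_mset_iff.mp ht
  exact (hb.apply_le hle).trans_lt hij

theorem gen_apply_add_single_le (hb : IsDecompositionFunction K m b) {j : Fin k} {t : Fin n}
    (ht : t ∈ mset K m j) : m (b (m j + single t 1)) ≤ m j + single t 1 := by
  obtain ⟨i, -, hle⟩ := mem_mset_iff.mp ht
  exact hb.gen_apply_le ⟨i, hle⟩

theorem apply_add_single_ne (hmin : MinimalGens m) (hb : IsDecompositionFunction K m b)
    {j : Fin k} {t s : Fin n} (ht : t ∈ mset K m j) (hs : s ∈ mset K m j) (hts : t ≠ s) :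
    b (m j + single t 1) ≠ b (m j + single s 1) := by
  intro heq
  have hle : m (b (m j + single t 1)) ≤ m j :=
    Finsupp.le_of_le_add_single_of_le_add_single hts (hb.gen_apply_add_single_le ht)
      (heq ▸ hb.gen_apply_add_single_le hs)
  exact (hb.apply_add_single_lt ht).ne (hmin _ _ hle)

theorem apply_add_single_of_notMem_mset (hb : IsDecompositionFunction K m b)
    (hlq : HasLinearQuotients K m) {u : Fin n →₀ ℕ} (hu : ∃ i, m i ≤ u) {t : Fin n}
    (ht : t ∉ mset K m (b u)) : b (u + single t 1) = b u := by
  have hgen : m (b u) ≤ u := hb.gen_apply_le hu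
  refine (hb.apply_le (hgen.trans le_self_add)).eq_or_lt.resolve_right fun hlt => ?_
  -- a smaller index would force a variable of `set(b u)` to divide `u / m (b u)`
  obtain ⟨r, hr, hrlt⟩ := hlq.exists_mem_mset_lt hlt
  have hrt : r ≠ t := by rintro rfl; exact ht hr
  have hle := hb.gen_apply_le ⟨b u, hgen.trans le_self_add⟩ (u := u + single t 1) r
  simp only [Finsupp.add_apply, Finsupp.single_eq_of_ne' hrt.symm, add_zero] at hle
  exact hb.notMem_mset_of_add_single_le
    (Finsupp.add_single_one_le_iff.mpr ⟨hgen, hrlt.trans_le hle⟩) hr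

theorem apply_add_single_of_mem_mset (hb : IsDecompositionFunction K m b)
    (hlq : HasLinearQuotients K m) (hreg : IsRegularDecomp K m b) {u : Fin n →₀ ℕ}
    (hu : ∃ i, m i ≤ u) {t : Fin n} (ht : t ∈ mset K m (b u)) :
    b (u + single t 1) = b (m (b u) + single t 1) := by
  induction u using WellFoundedLT.induction with
  | _ u ih =>
  obtain hgen | hlt := (hb.gen_apply_le hu).eq_or_lt
  · rw [hgen]
  -- strip off a variable `x_r` of `u / m (b u)` and use induction on `u / x_r`
  obtain ⟨r, hr⟩ := Finsupp.exists_add_single_one_le_of_lt hlt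
  set u' := u - single r 1
  have hu' : u' + single r 1 = u := tsub_add_cancel_of_le (le_add_self.trans hr)
  have hgen' : m (b u) ≤ u' := le_tsub_of_add_le_right hr
  have hbu' : b u' = b u := hb.apply_eq_of_le hgen' tsub_le_self
  have ih' : b (u' + single t 1) = b (m (b u) + single t 1) := by
    have hlt' : u' < u := hu' ▸ lt_add_of_pos_right u' (by simp [pos_iff_ne_zero])
    simpa only [hbu'] using ih u' hlt' ⟨_, hgen'⟩ (hbu' ▸ ht)
  have hr' : r ∉ mset K m (b (u' + single t 1)) := by
    rw [ih']
    exact fun h => hb.notMem_mset_of_add_single_le hr (hreg _ t ht h)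
  calc b (u + single t 1) = b (u' + single t 1 + single r 1) := by rw [add_right_comm, hu']
    _ = b (u' + single t 1) :=
      hb.apply_add_single_of_notMem_mset hlq ⟨_, hgen'.trans le_self_add⟩ hr'
    _ = b (m (b u) + single t 1) := ih'

theorem apply_gen_apply_add_single_comm (hb : IsDecompositionFunction K m b)
    (hlq : HasLinearQuotients K m) (hreg : IsRegularDecomp K m b) {j : Fin k} {t s : Fin n}
    (ht : t ∈ mset K m j) (hs : s ∈ mset K m j)
    (hts : t ∈ mset K m (b (m j + single s 1))) (hst : s ∈ mset K m (b (m j + single t 1))) :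
    b (m (b (m j + single t 1)) + single s 1) = b (m (b (m j + single s 1)) + single t 1) := by
  obtain ⟨i, -, hi⟩ := mem_mset_iff.mp ht
  obtain ⟨i', -, hi'⟩ := mem_mset_iff.mp hs
  rw [← hb.apply_add_single_of_mem_mset hlq hreg ⟨i, hi⟩ hst,
    ← hb.apply_add_single_of_mem_mset hlq hreg ⟨i', hi'⟩ hts, add_right_comm]

theorem mem_mset_of_notMem_mset (hmin : MinimalGens m) (hb : IsDecompositionFunction K m b)
    (hlq : HasLinearQuotients K m) {j : Fin k} {t s : Fin n}
    (ht : t ∈ mset K m j) (hs : s ∈ mset K m j) (hne : t ≠ s)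
    (hts : t ∉ mset K m (b (m j + single s 1))) : s ∈ mset K m (b (m j + single t 1)) := by
  obtain ⟨i, -, hi⟩ := mem_mset_iff.mp ht
  obtain ⟨i', -, hi'⟩ := mem_mset_iff.mp hs
  by_contra hst
  apply hb.apply_add_single_ne hmin ht hs hne
  rw [← hb.apply_add_single_of_notMem_mset hlq ⟨i, hi⟩ hst, add_right_comm,
    hb.apply_add_single_of_notMem_mset hlq ⟨i', hi'⟩ hts]

theorem apply_gen_apply_add_single_of_notMem_mset (hmin : MinimalGens m)
    (hb : IsDecompositionFunction K m b) (hlq : HasLinearQuotients K m)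
    (hreg : IsRegularDecomp K m b) {j : Fin k} {t s : Fin n}
    (ht : t ∈ mset K m j) (hs : s ∈ mset K m j) (hne : t ≠ s)
    (hts : t ∉ mset K m (b (m j + single s 1))) :
    b (m (b (m j + single t 1)) + single s 1) = b (m j + single s 1) := by
  obtain ⟨i, -, hi⟩ := mem_mset_iff.mp ht
  obtain ⟨i', -, hi'⟩ := mem_mset_iff.mp hs
  rw [← hb.apply_add_single_of_mem_mset hlq hreg ⟨i, hi⟩
      (hb.mem_mset_of_notMem_mset hmin hlq ht hs hne hts), add_right_comm,
    hb.apply_add_single_of_notMem_mset hlq ⟨i', hi'⟩ hts]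

end IsDecompositionFunction

end Decomposition

theorem Finset.sum_sum_erase_eq_zero {γ M : Type*} [DecidableEq γ] [AddCommMonoid M]
    (α : Finset γ) (F : γ → γ → M)
    (h : ∀ t ∈ α, ∀ s ∈ α, t ≠ s → F t s + F s t = 0) :
    ∑ t ∈ α, ∑ s ∈ α.erase t, F t s = 0 := by
  rw [Finset.sum_sigma']
  refine Finset.sum_involution (fun p _ => ⟨p.2, p.1⟩) ?_ ?_ ?_ (fun _ _ => rfl)
  · rintro ⟨t, s⟩ hp
    obtain ⟨ht, hst, hs⟩ := by simpa using hp
    exact h t ht s hs (Ne.symm hst)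
  · rintro ⟨t, s⟩ hp - heq
    obtain ⟨-, hst, -⟩ := by simpa using hp
    exact hst (congrArg Sigma.fst heq)
  · rintro ⟨t, s⟩ hp
    obtain ⟨ht, hst, hs⟩ := by simpa using hp
    simpa using ⟨hs, Ne.symm hst, ht⟩

section Signs

variable {n : ℕ}

theorem eps_add_eps_erase_add_one {α : Finset (Fin n)} {t s : Fin n} (ht : t ∈ α)
    (hts : t < s) :
    eps α t + eps (α.erase t) s + 1 = eps α s + eps (α.erase s) t := by
  have htf : t ∈ α.filter (· < s) := Finset.mem_filter.mpr ⟨ht, hts⟩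
  have hsf : s ∉ α.filter (· < t) := fun h => (Finset.mem_filter.mp h).2.not_gt hts
  simp only [eps, Finset.filter_erase, Finset.card_erase_of_mem htf,
    Finset.erase_eq_of_notMem hsf]
  have := Finset.card_pos.mpr ⟨t, htf⟩
  omega

theorem neg_one_pow_eps_mul_swap {R : Type*} [Monoid R] [HasDistribNeg R] {α : Finset (Fin n)}
    {t s : Fin n} (ht : t ∈ α) (hs : s ∈ α) (hts : t ≠ s) :
    (-1 : R) ^ (eps α t + 1) * (-1) ^ (eps (α.erase t) s + 1)
      = -((-1) ^ (eps α s + 1) * (-1) ^ (eps (α.erase s) t + 1)) := by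
  simp only [← pow_add]
  rcases hts.lt_or_gt with hlt | hgt
  · rw [show eps α s + 1 + (eps (α.erase s) t + 1) = eps α t + 1 + (eps (α.erase t) s + 1) + 1
      by have := eps_add_eps_erase_add_one ht hlt; omega, pow_succ, mul_neg_one, neg_neg]
  · rw [show eps α t + 1 + (eps (α.erase t) s + 1) = eps α s + 1 + (eps (α.erase s) t + 1) + 1
      by have := eps_add_eps_erase_add_one hs hgt; omega, pow_succ, mul_neg_one]

end Signs

section Differential

variable {K : Type*} [Field K] {n k : ℕ} {m : Fin k → (Fin n →₀ ℕ)}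
  {b : (Fin n →₀ ℕ) → Fin k} {i : ℕ} {g : Fin k} {α : Finset (Fin n)} {t s : Fin n}

noncomputable def cofactor (K : Type*) [Field K] {n k : ℕ} (m : Fin k → (Fin n →₀ ℕ))
    (b : (Fin n →₀ ℕ) → Fin k) (g : Fin k) (t : Fin n) : MvPolynomial (Fin n) K :=
  monomial (m g + single t 1 - m (b (m g + single t 1))) 1

noncomputable def dTerm (K : Type*) [Field K] {n k : ℕ} (m : Fin k → (Fin n →₀ ℕ))
    (b : (Fin n →₀ ℕ) → Fin k) (i : ℕ) (g : Fin k) (β : Finset (Fin n)) (t : Fin n) :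
    SymT K m i →₀ MvPolynomial (Fin n) K :=
  (X t : MvPolynomial (Fin n) K) • symEl K m i g (β.erase t)
    - cofactor K m b g t • symEl K m i (b (m g + single t 1)) (β.erase t)

/-- The formula for `d(g;β)`, evaluated also when `β ⊄ set(g)`. -/
noncomputable def dValue (K : Type*) [Field K] {n k : ℕ} (m : Fin k → (Fin n →₀ ℕ))
    (b : (Fin n →₀ ℕ) → Fin k) (i : ℕ) (g : Fin k) (β : Finset (Fin n)) :
    SymT K m i →₀ MvPolynomial (Fin n) K :=
  ∑ t ∈ β, (-1 : MvPolynomial (Fin n) K) ^ (eps β t + 1) • dTerm K m b i g β t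

/-- The unsigned `(t, s)`-summand of `d(d(g;α))`. -/
noncomputable def pairTerm (K : Type*) [Field K] {n k : ℕ} (m : Fin k → (Fin n →₀ ℕ))
    (b : (Fin n →₀ ℕ) → Fin k) (i : ℕ) (g : Fin k) (α : Finset (Fin n)) (t s : Fin n) :
    SymT K m i →₀ MvPolynomial (Fin n) K :=
  (X t : MvPolynomial (Fin n) K) • dTerm K m b i g (α.erase t) s
    - cofactor K m b g t •
      if ↑(α.erase t) ⊆ mset K m (b (m g + single t 1)) then
        dTerm K m b i (b (m g + single t 1)) (α.erase t) s
      else 0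

theorem dBasisSucc_eq_dValue (σ : SymT K m (i + 1)) :
    dBasisSucc K m b i σ = dValue K m b i σ.1.1 σ.1.2 := by
  simp only [dBasisSucc, dValue, dTerm, cofactor, ← Finset.sum_sub_distrib, mul_smul, smul_sub]

theorem dSucc_single_one (σ : SymT K m (i + 1)) :
    dSucc K m b i (Finsupp.single σ 1) = dBasisSucc K m b i σ := by
  rw [dSucc, Finsupp.linearCombination_single, one_smul]

theorem symEl_eq_zero_of_not_subset {β : Finset (Fin n)}
    (hβ : ¬ ↑β ⊆ mset K m g) : symEl K m i g β = 0 :=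
  dif_neg fun h => hβ h.1

theorem dSucc_symEl {β : Finset (Fin n)} (hβ : β.card = i + 1) :
    dSucc K m b i (symEl K m (i + 1) g β)
      = if ↑β ⊆ mset K m g then dValue K m b i g β else 0 := by
  split_ifs with hsub
  · rw [symEl, dif_pos ⟨hsub, hβ⟩]
    exact (dSucc_single_one (⟨(g, β), hsub, hβ⟩ : SymT K m (i + 1))).trans
      (dBasisSucc_eq_dValue _)
  · rw [symEl_eq_zero_of_not_subset hsub, map_zero]

theorem dZero_symEl_empty :
    dZero K m (symEl K m 0 g ∅) = monomial (m g) 1 := by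
  rw [symEl, dif_pos ⟨by simp, rfl⟩, dZero]
  exact (Finsupp.linearCombination_single _ (v := fun σ : SymT K m 0 => monomial (m σ.1.1) 1) 1
    (⟨(g, ∅), by simp, rfl⟩ : SymT K m 0)).trans (one_smul _ _)

theorem cofactor_mul_monomial (hb : IsDecompositionFunction K m b) (ht : t ∈ mset K m g) :
    cofactor K m b g t * monomial (m (b (m g + single t 1))) 1
      = (X t : MvPolynomial (Fin n) K) * monomial (m g) 1 := by
  rw [cofactor, monomial_mul, one_mul, tsub_add_cancel_of_le (hb.gen_apply_add_single_le ht),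
    monomial_add_single, pow_one, mul_comm]

theorem cofactor_mul_cofactor (hb : IsDecompositionFunction K m b) (ht : t ∈ mset K m g)
    (hs : s ∈ mset K m (b (m g + single t 1))) :
    cofactor K m b g t * cofactor K m b (b (m g + single t 1)) s
      = monomial (m g + single t 1 + single s 1
          - m (b (m (b (m g + single t 1)) + single s 1))) 1 := by
  rw [cofactor, cofactor, monomial_mul, one_mul,
    ← add_tsub_add_eq_tsub_right (m g + single t 1) (single s 1),
    tsub_add_tsub_cancel (add_le_add (hb.gen_apply_add_single_le ht) le_rfl)
      (hb.gen_apply_add_single_le hs)]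

theorem X_mul_cofactor (hb : IsDecompositionFunction K m b) (hs : s ∈ mset K m g) :
    (X t : MvPolynomial (Fin n) K) * cofactor K m b g s
      = monomial (m g + single t 1 + single s 1 - m (b (m g + single s 1))) 1 := by
  rw [cofactor, mul_comm, ← pow_one (X t : MvPolynomial (Fin n) K), ← monomial_add_single,
    add_right_comm, tsub_add_eq_add_tsub (hb.gen_apply_add_single_le hs)]

theorem dTerm_eq_zero_of_not_subset (hreg : IsRegularDecomp K m b) {β : Finset (Fin n)}
    (hs : s ∈ mset K m g) (hβ : ¬ ↑β ⊆ mset K m g) : dTerm K m b i g β s = 0 := by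
  have hβs : ¬ ↑(β.erase s) ⊆ mset K m g := fun h => hβ fun x hx => by
    by_cases hxs : x = s
    · exact hxs ▸ hs
    · exact h (Finset.mem_erase.mpr ⟨hxs, hx⟩)
  rw [dTerm, symEl_eq_zero_of_not_subset hβs,
    symEl_eq_zero_of_not_subset fun h => hβs (h.trans (hreg g s hs)), smul_zero, smul_zero,
    sub_zero]

theorem pairTerm_of_mem_mset (hreg : IsRegularDecomp K m b)
    (hst : s ∈ mset K m (b (m g + single t 1))) :
    pairTerm K m b i g α t s = (X t : MvPolynomial (Fin n) K) • dTerm K m b i g (α.erase t) s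
      - cofactor K m b g t • dTerm K m b i (b (m g + single t 1)) (α.erase t) s := by
  rw [pairTerm, ite_eq_left_iff.mpr fun h => (dTerm_eq_zero_of_not_subset hreg hst h).symm]

theorem pairTerm_of_notMem_mset (hs : s ∈ α.erase t)
    (hst : s ∉ mset K m (b (m g + single t 1))) :
    pairTerm K m b i g α t s
      = (X t : MvPolynomial (Fin n) K) • dTerm K m b i g (α.erase t) s := by
  rw [pairTerm, if_neg fun h => hst (h hs), smul_zero, sub_zero]

theorem pairTerm_comm_of_mem_mset_of_mem_mset (hb : IsDecompositionFunction K m b)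
    (hlq : HasLinearQuotients K m) (hreg : IsRegularDecomp K m b)
    (ht : t ∈ mset K m g) (hs : s ∈ mset K m g)
    (hts : t ∈ mset K m (b (m g + single s 1))) (hst : s ∈ mset K m (b (m g + single t 1))) :
    pairTerm K m b i g α t s = pairTerm K m b i g α s t := by
  have hcomm := hb.apply_gen_apply_add_single_comm hlq hreg ht hs hts hst
  have hcof : cofactor K m b g t * cofactor K m b (b (m g + single t 1)) s
      = cofactor K m b g s * cofactor K m b (b (m g + single s 1)) t := by
    rw [cofactor_mul_cofactor hb ht hst, cofactor_mul_cofactor hb hs hts, hcomm, add_right_comm]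
  rw [pairTerm_of_mem_mset hreg hst, pairTerm_of_mem_mset hreg hts]
  simp only [dTerm, smul_sub, smul_smul]
  rw [hcof, hcomm, show (α.erase t).erase s = (α.erase s).erase t from Finset.erase_right_comm]
  module

theorem pairTerm_comm_of_notMem_mset (hmin : MinimalGens m) (hb : IsDecompositionFunction K m b)
    (hlq : HasLinearQuotients K m) (hreg : IsRegularDecomp K m b) (hα : ↑α ⊆ mset K m g)
    (ht : t ∈ α) (hs : s ∈ α) (hne : t ≠ s) (hts : t ∉ mset K m (b (m g + single s 1))) :
    pairTerm K m b i g α t s = pairTerm K m b i g α s t := by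
  have htg : t ∈ mset K m g := hα ht
  have hsg : s ∈ mset K m g := hα hs
  have hst := hb.mem_mset_of_notMem_mset hmin hlq htg hsg hne hts
  have hgen := hb.apply_gen_apply_add_single_of_notMem_mset hmin hlq hreg htg hsg hne hts
  have hcof : cofactor K m b g t * cofactor K m b (b (m g + single t 1)) s
      = X t * cofactor K m b g s := by
    rw [cofactor_mul_cofactor hb htg hst, X_mul_cofactor hb hsg, hgen]
  rw [pairTerm_of_mem_mset hreg hst,
    pairTerm_of_notMem_mset (Finset.mem_erase.mpr ⟨hne, ht⟩) hts]
  simp only [dTerm, smul_sub, smul_smul]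
  rw [hcof, hgen, show (α.erase t).erase s = (α.erase s).erase t from Finset.erase_right_comm]
  module

theorem pairTerm_comm (hmin : MinimalGens m) (hb : IsDecompositionFunction K m b)
    (hlq : HasLinearQuotients K m) (hreg : IsRegularDecomp K m b) (hα : ↑α ⊆ mset K m g)
    (ht : t ∈ α) (hs : s ∈ α) (hne : t ≠ s) :
    pairTerm K m b i g α t s = pairTerm K m b i g α s t := by
  by_cases hts : t ∈ mset K m (b (m g + single s 1))
  · by_cases hst : s ∈ mset K m (b (m g + single t 1))
    · exact pairTerm_comm_of_mem_mset_of_mem_mset hb hlq hreg (hα ht) (hα hs) hts hst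
    · exact (pairTerm_comm_of_notMem_mset hmin hb hlq hreg hα hs ht hne.symm hst).symm
  · exact pairTerm_comm_of_notMem_mset hmin hb hlq hreg hα ht hs hne hts

theorem dSucc_dBasisSucc (σ : SymT K m (i + 2)) :
    dSucc K m b i (dBasisSucc K m b (i + 1) σ)
      = ∑ t ∈ σ.1.2, ∑ s ∈ σ.1.2.erase t,
          ((-1 : MvPolynomial (Fin n) K) ^ (eps σ.1.2 t + 1)
            * (-1) ^ (eps (σ.1.2.erase t) s + 1)) • pairTerm K m b i σ.1.1 σ.1.2 t s := by
  rw [dBasisSucc_eq_dValue, dValue, map_sum]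
  refine Finset.sum_congr rfl fun t ht => ?_
  have hcard : (σ.1.2.erase t).card = i + 1 := by
    rw [Finset.card_erase_of_mem ht, σ.2.2]; rfl
  have hsub : ↑(σ.1.2.erase t) ⊆ mset K m σ.1.1 :=
    (Finset.coe_subset.mpr (Finset.erase_subset t _)).trans σ.2.1
  rw [map_smul, dTerm, map_sub, map_smul, map_smul, dSucc_symEl hcard, dSucc_symEl hcard,
    if_pos hsub]
  simp only [pairTerm, mul_smul, ← Finset.smul_sum]
  congr 1
  split_ifs <;>
    simp only [dValue, Finset.smul_sum, ← Finset.sum_sub_distrib, smul_zero, sub_zero] <;>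
    exact Finset.sum_congr rfl fun s _ => by module

theorem dSucc_comp_dSucc (hmin : MinimalGens m) (hb : IsDecompositionFunction K m b)
    (hlq : HasLinearQuotients K m) (hreg : IsRegularDecomp K m b) (i : ℕ) :
    dSucc K m b i ∘ₗ dSucc K m b (i + 1) = 0 := by
  refine Finsupp.lhom_ext' fun σ => LinearMap.ext_ring ?_
  simp only [LinearMap.comp_apply, Finsupp.lsingle_apply, LinearMap.zero_comp,
    LinearMap.zero_apply]
  rw [dSucc_single_one, dSucc_dBasisSucc]
  refine Finset.sum_sum_erase_eq_zero _ _ fun t ht s hs hne => ?_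
  rw [pairTerm_comm hmin hb hlq hreg σ.2.1 ht hs hne, neg_one_pow_eps_mul_swap ht hs hne,
    neg_smul, neg_add_cancel]

theorem dZero_comp_dSucc_zero (hb : IsDecompositionFunction K m b) :
    dZero K m ∘ₗ dSucc K m b 0 = 0 := by
  refine Finsupp.lhom_ext' fun σ => LinearMap.ext_ring ?_
  obtain ⟨t, hα⟩ := Finset.card_eq_one.mp σ.2.2
  have ht : t ∈ mset K m σ.1.1 := σ.2.1 (by simp [hα])
  simp only [LinearMap.comp_apply, Finsupp.lsingle_apply, LinearMap.zero_comp,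
    LinearMap.zero_apply]
  rw [dSucc_single_one, dBasisSucc_eq_dValue, dValue, hα, Finset.sum_singleton, dTerm,
    Finset.erase_singleton, map_smul, map_sub, map_smul, map_smul, dZero_symEl_empty,
    dZero_symEl_empty]
  simp only [smul_eq_mul, cofactor_mul_monomial hb ht, sub_self, mul_zero]

end Differential

/-- `d ∘ d = 0`, i.e. the data `(F_•, d)` (with `F_0 = R` and `F_i` free
on the symbols `(m;α)`, `α ⊆ set(m)`, `|α| = i−1`) is a chain complex of free
`R`-modules. -/
theorem stmt9 (K : Type*) [Field K] {n k : ℕ} (m : Fin k → (Fin n →₀ ℕ))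
    (hmin : MinimalGens m) (hlq : HasLinearQuotients K m)
    (b : (Fin n →₀ ℕ) → Fin k) (hb : IsDecompositionFunction K m b)
    (hreg : IsRegularDecomp K m b) :
    (dZero K m) ∘ₗ (dSucc K m b 0) = 0 ∧
    ∀ i : ℕ, (dSucc K m b i) ∘ₗ (dSucc K m b (i + 1)) = 0 :=
  ⟨dZero_comp_dSucc_zero hb, dSucc_comp_dSucc hmin hb hlq hreg⟩
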